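/- Sub-Gaussianity of block-independent linear combinations: let X₁,…,X_n be real random variables with X_i sub-Gaussian with variance parameter σ_i², and suppose there is a partition of {1,…,n} into K subsets P₁,…,P_K, each containing L indices, such that the σ-algebras Σ_k = σ(X_i, i ∈ P_k), k = 1,…,K, are independent. Then for all reals α₁,…,α_n, the random variable Y = Σ_i α_i X_i is sub-Gaussian with variance parameter L Σ_i α_i² σ_i². -/
import Mathlib


open MeasureTheory
open scoped BigOperators ENNReal NNReal

set_option maxHeartbeats 1000000

noncomputable section

/-- `X` is sub-Gaussian with variance parameter `σ²`:
`log E[exp(tX)] ≤ σ² t²/2` for all `t ∈ ℝ` (in particular all exponential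
moments are finite). -/
def SubGaussianPar {Ω : Type*} [MeasurableSpace Ω] (μ : Measure Ω) (X : Ω → ℝ)
    (σ2 : ℝ) : Prop :=
  ∀ t : ℝ, Integrable (fun ω => Real.exp (t * X ω)) μ ∧
    ∫ ω, Real.exp (t * X ω) ∂μ ≤ Real.exp (σ2 * t ^ 2 / 2)

/-- lintegral of a product of functions measurable w.r.t. independent σ-algebras. -/
theorem aux_lintegral_prod {Ω ι : Type*} {mΩ : MeasurableSpace Ω} {μ : Measure Ω}
    [IsProbabilityMeasure μ]
    {m : ι → MeasurableSpace Ω} (h_le : ∀ i, m i ≤ mΩ)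
    (h_indep : ProbabilityTheory.iIndep m μ)
    {g : ι → Ω → ℝ≥0∞} (hg : ∀ i, Measurable[m i] (g i)) (s : Finset ι) :
    ∫⁻ ω, ∏ k ∈ s, g k ω ∂μ = ∏ k ∈ s, ∫⁻ ω, g k ω ∂μ := by
  classical
  induction s using Finset.induction with
  | empty => simp
  | @insert k₀ s hk₀ ih =>
    have hMg : (⨆ k ∈ (↑s : Set ι), m k) ≤ mΩ := iSup₂_le fun i _ => h_le i
    have hdisj : Disjoint ({k₀} : Set ι) (↑s : Set ι) := by
      simp [Set.disjoint_singleton_left, hk₀]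
    have hindep2 : ProbabilityTheory.Indep (m k₀) (⨆ k ∈ (↑s : Set ι), m k) μ := by
      have h := ProbabilityTheory.indep_iSup_of_disjoint h_le h_indep hdisj
      simpa using h
    have hprodmeas : Measurable[⨆ k ∈ (↑s : Set ι), m k] fun ω => ∏ k ∈ s, g k ω := by
      refine Finset.measurable_prod s fun i hi => ?_
      exact (hg i).mono (le_iSup₂ (f := fun k (_ : k ∈ (↑s : Set ι)) => m k) i
        (Finset.mem_coe.mpr hi)) le_rfl
    simp only [Finset.prod_insert hk₀]
    rw [ProbabilityTheory.lintegral_mul_eq_lintegral_mul_lintegral_of_independent_measurableSpace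
        (h_le k₀) hMg hindep2 (hg k₀) hprodmeas, ih]

/-- sub-Gaussianity of block-independent linear combinations: if
`X₁,…,X_n` are sub-Gaussian with variance parameters `σᵢ²` and there is a partition of
the indices into `K` blocks of `L` indices each generating independent σ-algebras, then
`Y = Σᵢ αᵢ Xᵢ` is sub-Gaussian with variance parameter `L Σᵢ αᵢ² σᵢ²`. -/
theorem stmt17
    {Ω : Type*} [MeasurableSpace Ω] (μ : Measure Ω) [IsProbabilityMeasure μ]
    (n K L : ℕ) (hK : 0 < K) (hL : 0 < L)
    (X : Fin n → Ω → ℝ) (hXm : ∀ i, Measurable (X i))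
    (σ : Fin n → ℝ) (hσ : ∀ i, 0 ≤ σ i)
    (hX : ∀ i, SubGaussianPar μ (X i) ((σ i) ^ 2))
    (P : Fin K → Finset (Fin n))
    (hcard : ∀ k, (P k).card = L)
    (hpart : ∀ i : Fin n, ∃! k, i ∈ P k)
    (hindep : ProbabilityTheory.iIndep
      (fun k : Fin K => ⨆ i ∈ P k, MeasurableSpace.comap (X i) inferInstance) μ)
    (α : Fin n → ℝ) :
    SubGaussianPar μ (fun ω => ∑ i, α i * X i ω)
      ((L : ℝ) * ∑ i, (α i) ^ 2 * (σ i) ^ 2) := by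
  classical
  intro t
  have hLpos : (0 : ℝ) < L := by exact_mod_cast hL
  set m : Fin K → MeasurableSpace Ω :=
    fun k => ⨆ i ∈ P k, MeasurableSpace.comap (X i) inferInstance with hm
  have h_le : ∀ k, m k ≤ ‹MeasurableSpace Ω› := fun k =>
    iSup₂_le fun i _ => (hXm i).comap_le
  -- blockwise functions
  set e : Fin n → Ω → ℝ≥0∞ :=
    fun i ω => ENNReal.ofReal (Real.exp (t * (α i * X i ω))) with he
  set g : Fin K → Ω → ℝ≥0∞ := fun k ω => ∏ i ∈ P k, e i ω with hg
  have hgm : ∀ k, Measurable[m k] (g k) := by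
    intro k
    refine Finset.measurable_prod _ fun i hi => ?_
    have hXi : Measurable[m k] (X i) := by
      have h1 : Measurable[MeasurableSpace.comap (X i) inferInstance] (X i) :=
        Measurable.of_comap_le le_rfl
      exact h1.mono (le_iSup₂ (f := fun j (_ : j ∈ P k) =>
        MeasurableSpace.comap (X j) inferInstance) i hi) le_rfl
    exact ENNReal.measurable_ofReal.comp
      (Real.measurable_exp.comp ((hXi.const_mul (α i)).const_mul t))
  -- partition bookkeeping
  choose c hc hc' using hpart
  have hPk : ∀ k, P k = Finset.univ.filter (fun i => c i = k) := by
    intro k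
    ext i
    simp only [Finset.mem_filter, Finset.mem_univ, true_and]
    constructor
    · intro h; exact (hc' i k h).symm
    · intro h; rw [← h]; exact hc i
  have hsum_part : ∀ f : Fin n → ℝ, (∑ k, ∑ i ∈ P k, f i) = ∑ i, f i := by
    intro f
    calc (∑ k, ∑ i ∈ P k, f i)
        = ∑ k, ∑ i ∈ Finset.univ.filter (fun i => c i = k), f i := by
          refine Finset.sum_congr rfl fun k _ => by rw [hPk k]
      _ = ∑ i, f i :=
          Finset.sum_fiberwise_of_maps_to (fun i _ => Finset.mem_univ (c i)) f
  have hprod_part : ∀ f : Fin n → ℝ≥0∞, (∏ k, ∏ i ∈ P k, f i) = ∏ i, f i := by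
    intro f
    calc (∏ k, ∏ i ∈ P k, f i)
        = ∏ k, ∏ i ∈ Finset.univ.filter (fun i => c i = k), f i := by
          refine Finset.prod_congr rfl fun k _ => by rw [hPk k]
      _ = ∏ i, f i :=
          Finset.prod_fiberwise_of_maps_to (fun i _ => Finset.mem_univ (c i)) f
  -- pointwise factorization
  have hpoint : ∀ ω, ENNReal.ofReal (Real.exp (t * ∑ i, α i * X i ω)) = ∏ k, g k ω := by
    intro ω
    have h1 : t * ∑ i, α i * X i ω = ∑ i, t * (α i * X i ω) := by
      rw [Finset.mul_sum]
    rw [h1, Real.exp_sum, ENNReal.ofReal_prod_of_nonneg (fun i _ => (Real.exp_pos _).le)]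
    exact (hprod_part (fun i => e i ω)).symm
  -- Hölder bound on each block
  have hblock : ∀ k, (∫⁻ ω, g k ω ∂μ) ≤
      ENNReal.ofReal (Real.exp (∑ i ∈ P k, (L : ℝ) * ((α i) ^ 2 * (σ i) ^ 2) * t ^ 2 / 2)) := by
    intro k
    set f : Fin n → Ω → ℝ≥0∞ :=
      fun i ω => ENNReal.ofReal (Real.exp ((L * (t * α i)) * X i ω)) with hf
    have hfm : ∀ i, Measurable (f i) :=
      fun i => ENNReal.measurable_ofReal.comp
        (Real.measurable_exp.comp ((hXm i).const_mul _))
    have hef : ∀ i ω, e i ω = f i ω ^ ((1 : ℝ) / L) := by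
      intro i ω
      have harg : ((L : ℝ) * (t * α i)) * X i ω * ((1 : ℝ) / L) = t * (α i * X i ω) := by
        field_simp
      show ENNReal.ofReal (Real.exp (t * (α i * X i ω))) =
        ENNReal.ofReal (Real.exp (((L : ℝ) * (t * α i)) * X i ω)) ^ ((1 : ℝ) / L)
      rw [ENNReal.ofReal_rpow_of_pos (Real.exp_pos _), ← Real.exp_mul, harg]
    have hsum_p : (∑ _i ∈ P k, (1 : ℝ) / L) = 1 := by
      rw [Finset.sum_const, hcard k, nsmul_eq_mul]
      exact mul_one_div_cancel hLpos.ne'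
    have hHolder : (∫⁻ ω, g k ω ∂μ) ≤ ∏ i ∈ P k, (∫⁻ ω, f i ω ∂μ) ^ ((1 : ℝ) / L) := by
      have := ENNReal.lintegral_prod_norm_pow_le (μ := μ) (P k)
        (f := f) (fun i _ => (hfm i).aemeasurable) (p := fun _ => (1 : ℝ) / L)
        hsum_p (fun i _ => by positivity)
      calc (∫⁻ ω, g k ω ∂μ) = ∫⁻ ω, ∏ i ∈ P k, f i ω ^ ((1 : ℝ) / L) ∂μ := by
            refine lintegral_congr fun ω => ?_
            exact Finset.prod_congr rfl fun i _ => hef i ω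
        _ ≤ _ := this
    refine hHolder.trans ?_
    have hterm : ∀ i ∈ P k, (∫⁻ ω, f i ω ∂μ) ^ ((1 : ℝ) / L) ≤
        ENNReal.ofReal (Real.exp ((L : ℝ) * ((α i) ^ 2 * (σ i) ^ 2) * t ^ 2 / 2)) := by
      intro i _
      have hsg := hX i (L * (t * α i))
      have hint : (∫⁻ ω, f i ω ∂μ) =
          ENNReal.ofReal (∫ ω, Real.exp ((L * (t * α i)) * X i ω) ∂μ) := by
        rw [← MeasureTheory.ofReal_integral_eq_lintegral_ofReal hsg.1
          (Filter.Eventually.of_forall fun ω => (Real.exp_pos _).le)]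
      have hb : (∫⁻ ω, f i ω ∂μ) ≤
          ENNReal.ofReal (Real.exp ((σ i) ^ 2 * (L * (t * α i)) ^ 2 / 2)) := by
        rw [hint]; exact ENNReal.ofReal_le_ofReal hsg.2
      calc (∫⁻ ω, f i ω ∂μ) ^ ((1 : ℝ) / L)
          ≤ (ENNReal.ofReal (Real.exp ((σ i) ^ 2 * (L * (t * α i)) ^ 2 / 2))) ^ ((1 : ℝ) / L) :=
            ENNReal.rpow_le_rpow hb (by positivity)
        _ = ENNReal.ofReal (Real.exp ((σ i) ^ 2 * (L * (t * α i)) ^ 2 / 2 * (1 / L))) := by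
            rw [ENNReal.ofReal_rpow_of_pos (Real.exp_pos _), ← Real.exp_mul]
        _ = ENNReal.ofReal (Real.exp ((L : ℝ) * ((α i) ^ 2 * (σ i) ^ 2) * t ^ 2 / 2)) := by
            congr 1
            field_simp
    calc (∏ i ∈ P k, (∫⁻ ω, f i ω ∂μ) ^ ((1 : ℝ) / L))
        ≤ ∏ i ∈ P k, ENNReal.ofReal
            (Real.exp ((L : ℝ) * ((α i) ^ 2 * (σ i) ^ 2) * t ^ 2 / 2)) :=
          Finset.prod_le_prod' hterm
      _ = ENNReal.ofReal (Real.exp (∑ i ∈ P k, (L : ℝ) * ((α i) ^ 2 * (σ i) ^ 2) * t ^ 2 / 2)) := by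
          rw [Real.exp_sum, ENNReal.ofReal_prod_of_nonneg (fun i _ => (Real.exp_pos _).le)]
  -- combine
  have hmain : (∫⁻ ω, ENNReal.ofReal (Real.exp (t * ∑ i, α i * X i ω)) ∂μ) ≤
      ENNReal.ofReal (Real.exp (((L : ℝ) * ∑ i, (α i) ^ 2 * (σ i) ^ 2) * t ^ 2 / 2)) := by
    have h1 : (∫⁻ ω, ENNReal.ofReal (Real.exp (t * ∑ i, α i * X i ω)) ∂μ) =
        ∏ k, ∫⁻ ω, g k ω ∂μ := by
      rw [lintegral_congr hpoint]
      exact aux_lintegral_prod h_le hindep hgm Finset.univ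
    rw [h1]
    calc (∏ k, ∫⁻ ω, g k ω ∂μ)
        ≤ ∏ k, ENNReal.ofReal
            (Real.exp (∑ i ∈ P k, (L : ℝ) * ((α i) ^ 2 * (σ i) ^ 2) * t ^ 2 / 2)) :=
          Finset.prod_le_prod' fun k _ => hblock k
      _ = ENNReal.ofReal
            (Real.exp (∑ k, ∑ i ∈ P k, (L : ℝ) * ((α i) ^ 2 * (σ i) ^ 2) * t ^ 2 / 2)) := by
          rw [Real.exp_sum, ENNReal.ofReal_prod_of_nonneg (fun k _ => (Real.exp_pos _).le)]
      _ = ENNReal.ofReal (Real.exp (((L : ℝ) * ∑ i, (α i) ^ 2 * (σ i) ^ 2) * t ^ 2 / 2)) := by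
          rw [hsum_part]
          congr 2
          rw [Finset.mul_sum, Finset.sum_mul, Finset.sum_div]
  have hmeasF : Measurable fun ω => Real.exp (t * ∑ i, α i * X i ω) :=
    Real.measurable_exp.comp ((Finset.measurable_sum Finset.univ
      fun i _ => (hXm i).const_mul (α i)).const_mul t)
  have hnn : 0 ≤ᵐ[μ] fun ω => Real.exp (t * ∑ i, α i * X i ω) :=
    Filter.Eventually.of_forall fun ω => (Real.exp_pos _).le
  have hintF : Integrable (fun ω => Real.exp (t * ∑ i, α i * X i ω)) μ := by
    refine ⟨hmeasF.aestronglyMeasurable, ?_⟩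
    rw [hasFiniteIntegral_iff_ofReal hnn]
    exact lt_of_le_of_lt hmain ENNReal.ofReal_lt_top
  refine ⟨hintF, ?_⟩
  rw [MeasureTheory.integral_eq_lintegral_of_nonneg_ae hnn hmeasF.aestronglyMeasurable]
  exact ENNReal.toReal_le_of_le_ofReal (Real.exp_pos _).le hmain

end
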